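/- arXiv:2212.02830 — 2 statements merged into one kernel-verified Lean document; each statement's English description precedes it below -/
import Mathlib

section
/- Correctness of scatter-reduce accumulation: after K−1 rounds of the scatter-reduce step on a ring of K devices, device k holds in its (k+1 mod K)-th chunk the sum of chunk (k+1 mod K) over all K devices. Formally, if s_n(k) denotes the value held by device k after round n for the chunk indexed (k−n) mod K, defined recursively by s_0(k) = c_k^{((k) mod K)} being its own chunk, and s_{n}(k) = s_{n-1}((k-1) mod K) + c_k^{((k-n) mod K)}, then s_{K-1}(k) = Σ_{j=0}^{K-1} c_j^{((k+1) mod K)}. -/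
/-- Correctness of scatter-reduce: after `K-1` rounds, device `k` holds the sum of
chunk `(k+1) mod K` over all devices. -/
theorem stmt_1 (K : ℕ) [NeZero K]
    (c : ZMod K → ZMod K → ℝ)   -- `c k j` is device `k`'s chunk with index `j`
    (s : ℕ → ZMod K → ℝ)
    (h0 : ∀ k : ZMod K, s 0 k = c k k)
    (hrec : ∀ (n : ℕ) (k : ZMod K), 1 ≤ n →
      s n k = s (n - 1) (k - 1) + c k (k - (n : ZMod K)))
    (k : ZMod K) :
    s (K - 1) k = ∑ j : ZMod K, c j (k + 1) := by
  have key : ∀ (n : ℕ) (k : ZMod K),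
      s n k = ∑ i ∈ Finset.range (n + 1), c (k - (i : ZMod K)) (k - (n : ZMod K)) := by
    intro n
    induction n with
    | zero => intro k; simp [h0 k]
    | succ n ih =>
      intro k
      rw [hrec (n + 1) k (by omega)]
      simp only [Nat.add_sub_cancel]
      rw [ih (k - 1)]
      conv_rhs => rw [Finset.sum_range_succ']
      congr 1
      · apply Finset.sum_congr rfl
        intro i _
        congr 1
        · push_cast; ring
        · push_cast; ring
      · simp
  rw [key (K - 1) k]
  have hK : 1 ≤ K := Nat.one_le_iff_ne_zero.mpr (NeZero.ne K)
  have h1 : ((K - 1 : ℕ) : ZMod K) = -1 := by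
    have : ((K - 1 : ℕ) : ZMod K) = (K : ZMod K) - 1 := by
      push_cast [Nat.cast_sub hK]; ring
    simp [this]
  rw [h1, sub_neg_eq_add, Nat.sub_add_cancel hK]
  have hbij : Function.Bijective (fun i : Fin K => k - (i : ℕ)) := by
    rw [Fintype.bijective_iff_surjective_and_card]
    constructor
    · intro j
      refine ⟨⟨(k - j).val, ZMod.val_lt _⟩, ?_⟩
      simp [ZMod.natCast_val, ZMod.cast_id]
    · simp [ZMod.card]
  rw [← Fin.sum_univ_eq_sum_range (fun i => c (k - (i : ℕ)) (k + 1)) K]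
  exact Fintype.sum_bijective _ hbij (fun i => c (k - (i : ℕ)) (k + 1))
    (fun j => c j (k + 1)) (fun i => rfl)
end

section
/- For the star topology with a bandwidth constraint, the minimax transmission time is achieved by equalizing per-device transmission times: given positive rates per unit bandwidth r_1,...,r_K and total bandwidth B > 0, the minimum over bandwidth allocations (B_i > 0, Σ B_i ≤ B) of max_i M/(B_i r_i) equals (M/B)·Σ_i (1/r_i). -/
/-- The minimax star-topology transmission time under the bandwidth constraint equals
`(M/B) * Σ_i 1/r_i`, attained by equalizing per-device transmission times. -/
theorem stmt_5 (K : ℕ) (hK : 0 < K) (M B : ℝ) (hM : 0 < M) (hB : 0 < B)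
    (r : Fin K → ℝ) (hr : ∀ i, 0 < r i)
    (hne : (Finset.univ : Finset (Fin K)).Nonempty) :
    IsLeast
      { t : ℝ | ∃ Ba : Fin K → ℝ, (∀ i, 0 < Ba i) ∧ (∑ i, Ba i ≤ B) ∧
        t = Finset.univ.sup' hne (fun i => M / (Ba i * r i)) }
      ((M / B) * ∑ i, 1 / r i) := by
  set S : ℝ := ∑ i, 1 / r i with hS
  have hSpos : 0 < S := by
    apply Finset.sum_pos
    · intro i _
      have := hr i
      positivity
    · exact hne
  constructor
  · -- membership: equal-time allocation
    refine ⟨fun i => B / (r i * S), fun i => by have := hr i; positivity, ?_, ?_⟩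
    · have : ∑ i, B / (r i * S) = B := by
        have : ∑ i, B / (r i * S) = (B / S) * ∑ i, 1 / r i := by
          rw [Finset.mul_sum]
          apply Finset.sum_congr rfl
          intro i _
          field_simp
        rw [this, ← hS]
        field_simp
      rw [this]
    · have heq : ∀ i : Fin K, M / ((B / (r i * S)) * r i) = (M / B) * S := by
        intro i
        have hri := hr i
        field_simp
      rw [show (fun i => M / ((B / (r i * S)) * r i)) = fun _ => (M / B) * S from
        funext heq, Finset.sup'_const]
  · -- lower bound
    rintro t ⟨Ba, hBa, hsum, rfl⟩
    have hne' := hne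
    obtain ⟨i0, _⟩ := hne'
    set t := Finset.univ.sup' hne (fun i => M / (Ba i * r i)) with ht
    have hle : ∀ i : Fin K, M / (Ba i * r i) ≤ t := by
      intro i
      rw [ht]
      exact Finset.le_sup' (fun i => M / (Ba i * r i)) (Finset.mem_univ i)
    have htpos : 0 < t := lt_of_lt_of_le (by have := hBa i0; have := hr i0; positivity : (0:ℝ) < M / (Ba i0 * r i0)) (hle i0)
    have key : ∀ i : Fin K, 1 / r i ≤ t * Ba i / M := by
      intro i
      have h1 := hle i
      have hd : 0 < Ba i * r i := mul_pos (hBa i) (hr i)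
      rw [div_le_iff₀ hd] at h1
      rw [div_le_div_iff₀ (hr i) hM]
      nlinarith [hr i, hBa i]
    have hsum2 : S ≤ (t / M) * B := by
      calc S ≤ ∑ i, t * Ba i / M := Finset.sum_le_sum (fun i _ => key i)
        _ = (t / M) * ∑ i, Ba i := by rw [Finset.mul_sum]; apply Finset.sum_congr rfl; intro i _; ring
        _ ≤ (t / M) * B := by
            apply mul_le_mul_of_nonneg_left hsum
            positivity
    rw [div_mul_eq_mul_div, div_le_iff₀ hB]
    rw [div_mul_eq_mul_div, le_div_iff₀ hM] at hsum2
    nlinarith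
end
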